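/- arXiv:2411.10235 — 4 statements merged into one kernel-verified Lean document; each statement's English description precedes it below -/
import Mathlib

section
/- Let $p$ be a probability density on $\mathbb{R}^d$ with finite second moment, absolutely continuous with respect to $\gamma_d$ with $r = p/\gamma_d$, and let $V(t,x) = \frac{1}{t}\nabla \log Q_t r(x)$ where $Q_t r(x) = \int r(tx + \sqrt{1-t^2} z)\, d\gamma_d(z)$. Then $\lim_{t \to 0^+} V(t,x) = \int y \, p(y)\, dy$ for every $x \in \mathbb{R}^d$, so the velocity field extends continuously to $t = 0$. -/
/-!
Substituting `y = t x + √(1 - t²) z` writes `Q_t r(x) = ∫ p(y) M_t(x, y) dy`, where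
`M_t(x, ·) = mehlerRatio t x` is the density of `𝒩(t x, (1 - t²) I)` relative to `γ_d`.
Its gradient in `x` is `M_t(x, y) t (y - t x) / (1 - t²)`, so
`(1 / t) ∇ log Q_t r(x) = (∫ y p(y) M_t(x, y) dy / ∫ p(y) M_t(x, y) dy - t x) / (1 - t²)`.
Completing the square bounds `M_t(x, y) ≤ (1 - t²)^(-d/2) exp(‖x‖² / 2)` uniformly in `y`, and
`M_t(x, y) → 1` as `t → 0`; since `p` has a finite first moment, dominated convergence sends both
integrals to their values at `t = 0`, namely `1` and the mean of `p`.
-/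

open MeasureTheory Real Set Filter Topology

variable {E : Type*} [NormedAddCommGroup E] [InnerProductSpace ℝ E]
  {F : Type*} [NormedAddCommGroup F] [NormedSpace ℝ F]

noncomputable def mehlerRatio (t : ℝ) (x y : E) : ℝ :=
  (√(1 - t ^ 2) ^ Module.finrank ℝ E)⁻¹ *
    exp (‖y‖ ^ 2 / 2 - ‖y - t • x‖ ^ 2 / (2 * (1 - t ^ 2)))

theorem mehlerRatio_nonneg (t : ℝ) (x y : E) : 0 ≤ mehlerRatio t x y := by
  unfold mehlerRatio; positivity

theorem continuous_mehlerRatio (t : ℝ) (x : E) : Continuous (mehlerRatio t x) := by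
  unfold mehlerRatio; fun_prop

theorem hasFDerivAt_mehlerRatio (t : ℝ) (x y : E) :
    HasFDerivAt (fun x => mehlerRatio t x y)
      (innerSL ℝ ((mehlerRatio t x y * (t / (1 - t ^ 2))) • (y - t • x))) x := by
  have hlin : HasFDerivAt (fun x : E => y - t • x) (-(t • ContinuousLinearMap.id ℝ E)) x :=
    ((ContinuousLinearMap.id ℝ E).hasFDerivAt.const_smul t).const_sub y
  have hderiv := (((hlin.norm_sq.const_mul (2 * (1 - t ^ 2))⁻¹).const_sub (‖y‖ ^ 2 / 2)).exp).const_mul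
    (√(1 - t ^ 2) ^ Module.finrank ℝ E)⁻¹
  have hfun : (fun x => mehlerRatio t x y) = fun x =>
      (√(1 - t ^ 2) ^ Module.finrank ℝ E)⁻¹ *
        exp (‖y‖ ^ 2 / 2 - (2 * (1 - t ^ 2))⁻¹ * ‖y - t • x‖ ^ 2) := by
    funext x; simp only [mehlerRatio, div_eq_inv_mul]
  rw [hfun]
  refine hderiv.congr_fderiv ?_
  ext v
  simp only [mul_inv_rev, map_sub, map_smul, ContinuousLinearMap.comp_neg,
    ContinuousLinearMap.comp_smulₛₗ, ringHom_apply, ContinuousLinearMap.comp_id, smul_neg, neg_neg,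
    smul_apply, sub_apply, coe_innerSL_apply, smul_eq_mul,
    nsmul_eq_mul, Nat.cast_ofNat, congrFun hfun x]
  ring

theorem tendsto_mehlerRatio (x y : E) :
    Tendsto (fun t => mehlerRatio t x y) (𝓝 0) (𝓝 1) := by
  have : ContinuousAt (fun t => mehlerRatio t x y) 0 := by
    unfold mehlerRatio
    fun_prop (disch := norm_num)
  simpa [mehlerRatio] using this.tendsto

theorem mehlerRatio_le {t : ℝ} (ht : t ^ 2 < 1) {x : E} {R : ℝ} (hx : ‖x‖ ≤ R) (y : E) :
    mehlerRatio t x y ≤ (√(1 - t ^ 2) ^ Module.finrank ℝ E)⁻¹ * exp (R ^ 2 / 2) := by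
  have hσ : 0 < 1 - t ^ 2 := by linarith
  -- completing the square in `y`
  have hsq : ‖y‖ ^ 2 / 2 - ‖y - t • x‖ ^ 2 / (2 * (1 - t ^ 2))
      = ‖x‖ ^ 2 / 2 - ‖t • y - x‖ ^ 2 / (2 * (1 - t ^ 2)) := by
    simp only [norm_sub_sq_real, norm_smul, real_inner_smul_left, real_inner_smul_right,
      Real.norm_eq_abs, mul_pow, sq_abs]
    rw [real_inner_comm]
    field_simp
    ring
  unfold mehlerRatio
  gcongr
  rw [hsq]
  have : ‖x‖ ^ 2 ≤ R ^ 2 := pow_le_pow_left₀ (norm_nonneg x) hx 2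
  have : 0 ≤ ‖t • y - x‖ ^ 2 / (2 * (1 - t ^ 2)) := by positivity
  linarith

theorem eventually_sq_lt_one : ∀ᶠ t : ℝ in 𝓝 0, t ^ 2 < 1 :=
  (continuous_pow 2).continuousAt.eventually_lt continuousAt_const (by norm_num)

theorem norm_mehlerRatio_smul_le {t : ℝ} (ht : t ^ 2 < 1) {x : E} {R : ℝ} (hx : ‖x‖ ≤ R)
    (y : E) (v : F) :
    ‖mehlerRatio t x y • v‖ ≤ (√(1 - t ^ 2) ^ Module.finrank ℝ E)⁻¹ * exp (R ^ 2 / 2) * ‖v‖ := by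
  rw [norm_smul, Real.norm_of_nonneg (mehlerRatio_nonneg t x y)]
  exact mul_le_mul_of_nonneg_right (mehlerRatio_le ht hx y) (norm_nonneg v)

theorem integral_comp_add_smul_mul_gaussian [MeasurableSpace E] [BorelSpace E]
    [FiniteDimensional ℝ E] (μ : Measure E) [μ.IsAddHaarMeasure] (f : E → ℝ) (c : ℝ) {t : ℝ}
    (ht : t ^ 2 < 1) (x : E) :
    ∫ z, f (t • x + √(1 - t ^ 2) • z) * (c * exp (-‖z‖ ^ 2 / 2)) ∂μ
      = ∫ y, mehlerRatio t x y * (f y * (c * exp (-‖y‖ ^ 2 / 2))) ∂μ := by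
  set s := √(1 - t ^ 2)
  have hs : 0 < s := Real.sqrt_pos.2 (by linarith)
  have hs2 : s ^ 2 = 1 - t ^ 2 := Real.sq_sqrt (by linarith)
  set g : E → ℝ := fun y => f y * (c * exp (-‖s⁻¹ • (y - t • x)‖ ^ 2 / 2))
  have hexp : ∀ y : E, -‖s⁻¹ • (y - t • x)‖ ^ 2 / 2
      = -‖y‖ ^ 2 / 2 + (‖y‖ ^ 2 / 2 - ‖y - t • x‖ ^ 2 / (2 * (1 - t ^ 2))) := fun y => by
    rw [norm_smul, mul_pow, norm_inv, Real.norm_of_nonneg hs.le, inv_pow, hs2]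
    field_simp
    ring
  calc ∫ z, f (t • x + s • z) * (c * exp (-‖z‖ ^ 2 / 2)) ∂μ
      = ∫ z, g (t • x + s • z) ∂μ := by
        simp [g, smul_smul, inv_mul_cancel₀ hs.ne']
    _ = (s ^ Module.finrank ℝ E)⁻¹ • ∫ y, g y ∂μ := by
        rw [Measure.integral_comp_smul_of_nonneg μ (fun w => g (t • x + w)) s (hR := hs.le),
          integral_add_left_eq_self]
    _ = ∫ y, mehlerRatio t x y * (f y * (c * exp (-‖y‖ ^ 2 / 2))) ∂μ := by
        rw [← integral_smul]
        congr 1 with y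
        simp only [g, mehlerRatio, smul_eq_mul, hexp, exp_add]
        ring

theorem HasGradientAt.log [CompleteSpace E] {f : E → ℝ} {g x : E} (hf : HasGradientAt f g x)
    (hx : f x ≠ 0) : HasGradientAt (fun y => Real.log (f y)) ((f x)⁻¹ • g) x := by
  rw [hasGradientAt_iff_hasFDerivAt, map_smul]
  exact hf.hasFDerivAt.log hx

section Integral

variable [MeasurableSpace E] [BorelSpace E] {μ : Measure E}

theorem MeasureTheory.Integrable.smul_id_of_norm_sq_mul [SecondCountableTopology E] {p : E → ℝ}
    (hp : Integrable p μ) (h2 : Integrable (fun y => ‖y‖ ^ 2 * p y) μ) :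
    Integrable (fun y => p y • y) μ := by
  refine (hp.norm.add h2.norm).mono' (hp.1.smul aestronglyMeasurable_id)
    (Eventually.of_forall fun y => ?_)
  rw [Pi.add_apply, norm_smul, norm_mul, norm_pow, norm_norm]
  nlinarith [norm_nonneg (p y), norm_nonneg y, sq_nonneg (‖y‖ - 1)]

theorem MeasureTheory.Integrable.mehlerRatio_smul {f : E → F} (hf : Integrable f μ) {t : ℝ}
    (ht : t ^ 2 < 1) (x : E) : Integrable (fun y => mehlerRatio t x y • f y) μ := by
  refine hf.bdd_smul ((√(1 - t ^ 2) ^ Module.finrank ℝ E)⁻¹ * exp (‖x‖ ^ 2 / 2))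
    (continuous_mehlerRatio t x).aestronglyMeasurable (Eventually.of_forall fun y => ?_)
  rw [Real.norm_of_nonneg (mehlerRatio_nonneg t x y)]
  exact mehlerRatio_le ht le_rfl y

theorem tendsto_integral_mehlerRatio_smul {f : E → F} (hf : Integrable f μ) (x : E) :
    Tendsto (fun t => ∫ y, mehlerRatio t x y • f y ∂μ) (𝓝 0) (𝓝 (∫ y, f y ∂μ)) := by
  have hinv : ∀ᶠ t : ℝ in 𝓝 0, (√(1 - t ^ 2) ^ Module.finrank ℝ E)⁻¹ < 2 := by
    have : ContinuousAt (fun t : ℝ => (√(1 - t ^ 2) ^ Module.finrank ℝ E)⁻¹) 0 := by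
      fun_prop (disch := norm_num)
    exact this.eventually_lt continuousAt_const (by norm_num)
  refine tendsto_integral_filter_of_dominated_convergence
    (fun y => 2 * exp (‖x‖ ^ 2 / 2) * ‖f y‖)
    (Eventually.of_forall fun t => (continuous_mehlerRatio t x).aestronglyMeasurable.smul hf.1)
    ?_ (hf.norm.const_mul _) (Eventually.of_forall fun y => ?_)
  · filter_upwards [eventually_sq_lt_one, hinv] with t ht hlt
    refine Eventually.of_forall fun y => (norm_mehlerRatio_smul_le ht le_rfl y (f y)).trans ?_
    gcongr
  · simpa using (tendsto_mehlerRatio x y).smul_const (f y)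

theorem hasGradientAt_integral_mehlerRatio_mul [FiniteDimensional ℝ E] {p : E → ℝ}
    (hp : Integrable p μ)
    (hp₁ : Integrable (fun y => p y • y) μ) {t : ℝ} (ht : t ^ 2 < 1) (x : E) :
    HasGradientAt (fun x => ∫ y, mehlerRatio t x y * p y ∂μ)
      ((t / (1 - t ^ 2)) • ((∫ y, mehlerRatio t x y • p y • y ∂μ)
        - (∫ y, mehlerRatio t x y * p y ∂μ) • t • x)) x := by
  set C := (√(1 - t ^ 2) ^ Module.finrank ℝ E)⁻¹ * exp ((‖x‖ + 1) ^ 2 / 2)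
  set G : E → E → E := fun x' y => (t / (1 - t ^ 2)) • mehlerRatio t x' y • p y • (y - t • x')
  have ht1 : |t| ≤ 1 := (sq_lt_one_iff_abs_lt_one t).1 ht |>.le
  have hderiv : ∀ y x',
      HasFDerivAt (fun x => mehlerRatio t x y * p y) (innerSL ℝ (G x' y)) x' := by
    intro y x'
    refine ((hasFDerivAt_mehlerRatio t x' y).mul_const (p y)).congr_fderiv ?_
    ext v
    simp only [map_smul, map_sub, smul_apply, sub_apply,
      coe_innerSL_apply, smul_eq_mul, G]
    ring
  have hbound : ∀ y, ∀ x' ∈ Metric.ball x 1,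
      ‖innerSL ℝ (G x' y)‖ ≤ |t / (1 - t ^ 2)| * C * (‖p y • y‖ + (‖x‖ + 1) * ‖p y‖) := by
    intro y x' hx'
    rw [innerSL_apply_norm, norm_smul, Real.norm_eq_abs, mul_assoc]
    gcongr
    refine (norm_mehlerRatio_smul_le ht (norm_lt_of_mem_ball hx').le y _).trans ?_
    gcongr
    rw [smul_sub]
    refine (norm_sub_le _ _).trans ?_
    gcongr
    rw [norm_smul, norm_smul, Real.norm_eq_abs, mul_comm]
    gcongr
    exact mul_le_of_le_one_left (by positivity) ht1 |>.trans (norm_lt_of_mem_ball hx').le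
  have hG_meas : AEStronglyMeasurable (G x) μ :=
    ((continuous_mehlerRatio t x).aestronglyMeasurable.smul
      (hp.1.smul (continuous_id.sub continuous_const).aestronglyMeasurable)).const_smul _
  have hbound_int :
      Integrable (fun y => |t / (1 - t ^ 2)| * C * (‖p y • y‖ + (‖x‖ + 1) * ‖p y‖)) μ :=
    (hp₁.norm.add (hp.norm.const_mul _)).const_mul _
  have hG_int : Integrable (G x) μ := by
    refine hbound_int.mono' hG_meas (Eventually.of_forall fun y => ?_)
    simpa only [innerSL_apply_norm] using hbound y x (Metric.mem_ball_self one_pos)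
  have hfd := hasFDerivAt_integral_of_dominated_of_fderiv_le (Metric.ball_mem_nhds x one_pos)
    (F := fun x y => mehlerRatio t x y * p y)
    (Eventually.of_forall fun x' => (continuous_mehlerRatio t x').aestronglyMeasurable.mul hp.1)
    (hp.mehlerRatio_smul ht x) ((innerSL ℝ).continuous.comp_aestronglyMeasurable hG_meas)
    (Eventually.of_forall hbound) hbound_int (Eventually.of_forall fun y x' _ => hderiv y x')
  rw [(innerSL ℝ).integral_comp_commSL (by simp) hG_int] at hfd
  have hsplit : ∀ y, mehlerRatio t x y • p y • (y - t • x)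
      = mehlerRatio t x y • p y • y - (mehlerRatio t x y * p y) • t • x := fun y => by
    simp only [smul_sub, smul_smul, mul_assoc]
  have hG : ∫ y, G x y ∂μ = (t / (1 - t ^ 2)) • ((∫ y, mehlerRatio t x y • p y • y ∂μ)
      - (∫ y, mehlerRatio t x y * p y ∂μ) • t • x) := by
    have hZ_int : Integrable (fun y => (mehlerRatio t x y * p y) • t • x) μ :=
      (hp.mehlerRatio_smul ht x).smul_const _
    rw [integral_smul, integral_congr_ae (Eventually.of_forall hsplit),
      integral_sub (hp₁.mehlerRatio_smul ht x) hZ_int, integral_smul_const]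
  rw [← hG]
  exact hfd

theorem smul_gradient_log_integral_mehlerRatio_mul [FiniteDimensional ℝ E] {p : E → ℝ}
    (hp : Integrable p μ) (hp₁ : Integrable (fun y => p y • y) μ) {t : ℝ} (ht0 : t ≠ 0)
    (ht : t ^ 2 < 1) {x : E} (hZ : ∫ y, mehlerRatio t x y * p y ∂μ ≠ 0) :
    (1 / t) • gradient (fun z => Real.log (∫ y, mehlerRatio t z y * p y ∂μ)) x
      = (1 - t ^ 2)⁻¹ • ((∫ y, mehlerRatio t x y * p y ∂μ)⁻¹ • (∫ y, mehlerRatio t x y • p y • y ∂μ)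
        - t • x) := by
  have hσ : 1 - t ^ 2 ≠ 0 := by linarith
  rw [((hasGradientAt_integral_mehlerRatio_mul hp hp₁ ht x).log hZ).gradient]
  simp only [smul_sub, smul_smul]
  congr 2 <;> field_simp

theorem tendsto_smul_gradient_log_integral_mehlerRatio_mul [FiniteDimensional ℝ E] {p : E → ℝ}
    (hp : ∫ y, p y ∂μ ≠ 0) (hp₁ : Integrable (fun y => p y • y) μ) (x : E) :
    Tendsto (fun t => (1 / t) • gradient (fun z => Real.log (∫ y, mehlerRatio t z y * p y ∂μ)) x)
      (𝓝[>] 0) (𝓝 ((∫ y, p y ∂μ)⁻¹ • ∫ y, p y • y ∂μ)) := by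
  have hp_int : Integrable p μ := .of_integral_ne_zero hp
  have hZ := tendsto_integral_mehlerRatio_smul hp_int x
  have hA := tendsto_integral_mehlerRatio_smul hp₁ x
  have hV := (((tendsto_const_nhds (x := (1 : ℝ))).sub
    ((tendsto_id (x := 𝓝 (0 : ℝ))).pow 2)).inv₀ (by norm_num)).smul
    (((hZ.inv₀ hp).smul hA).sub (tendsto_id.smul_const x))
  simp only [smul_eq_mul, id, sub_zero, zero_smul, ne_eq, OfNat.ofNat_ne_zero,
    not_false_eq_true, zero_pow, inv_one, one_smul] at hV
  refine (hV.mono_left nhdsWithin_le_nhds).congr' ?_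
  filter_upwards [self_mem_nhdsWithin, nhdsWithin_le_nhds
    (eventually_sq_lt_one.and (hZ.eventually_ne hp))] with t htpos ⟨ht, hZt⟩
  exact (smul_gradient_log_integral_mehlerRatio_mul hp_int hp₁ htpos.ne' ht hZt).symm

end Integral

theorem stmt_1_general (d : ℕ) (r : EuclideanSpace ℝ (Fin d) → ℝ)
    (γd : EuclideanSpace ℝ (Fin d) → ℝ)
    (hγd : ∀ y, γd y = (2 * π) ^ (-(d : ℝ) / 2) * Real.exp (-‖y‖ ^ 2 / 2))
    (hprob : ∫ y, r y * γd y = 1)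
    (hmom : Integrable (fun y => ‖y‖ ^ 2 * (r y * γd y)))
    (Q : ℝ → EuclideanSpace ℝ (Fin d) → ℝ)
    (hQ : ∀ t x, Q t x = ∫ z, r (t • x + Real.sqrt (1 - t ^ 2) • z) * γd z)
    (x : EuclideanSpace ℝ (Fin d)) :
    Tendsto (fun t : ℝ => (1 / t) • gradient (fun z => Real.log (Q t z)) x)
      (𝓝[>] 0) (𝓝 (∫ y, (r y * γd y) • y)) := by
  obtain rfl : γd = _ := funext hγd
  beta_reduce at hprob hmom hQ ⊢
  have hp : ∫ y, r y * ((2 * π) ^ (-(d : ℝ) / 2) * exp (-‖y‖ ^ 2 / 2)) ≠ 0 := by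
    rw [hprob]; exact one_ne_zero
  have hlim := tendsto_smul_gradient_log_integral_mehlerRatio_mul hp
    ((Integrable.of_integral_ne_zero hp).smul_id_of_norm_sq_mul hmom) x
  rw [hprob, inv_one, one_smul] at hlim
  refine hlim.congr' ?_
  filter_upwards [nhdsWithin_le_nhds eventually_sq_lt_one] with t ht
  simp only [hQ, integral_comp_add_smul_mul_gaussian _ r _ ht]

/-- the velocity field `V(t,x) = (1/t) ∇ log Q_t r (x)` tends to the
mean of `p` as `t → 0⁺`. -/
theorem stmt_1 (d : ℕ) (r : EuclideanSpace ℝ (Fin d) → ℝ)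
    (hr_meas : Measurable r) (hr_nonneg : ∀ y, 0 ≤ r y)
    (γd : EuclideanSpace ℝ (Fin d) → ℝ)
    (hγd : ∀ y, γd y = (2 * π) ^ (-(d : ℝ) / 2) * Real.exp (-‖y‖ ^ 2 / 2))
    (hprob : ∫ y, r y * γd y = 1)
    (hmom : Integrable (fun y => ‖y‖ ^ 2 * (r y * γd y)))
    (Q : ℝ → EuclideanSpace ℝ (Fin d) → ℝ)
    (hQ : ∀ t x, Q t x = ∫ z, r (t • x + Real.sqrt (1 - t ^ 2) • z) * γd z)
    (hQpos : ∀ t ∈ Ico (0 : ℝ) 1, ∀ x, 0 < Q t x)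
    (x : EuclideanSpace ℝ (Fin d)) :
    Tendsto (fun t : ℝ => (1 / t) • gradient (fun z => Real.log (Q t z)) x)
      (𝓝[>] 0) (𝓝 (∫ y, (r y * γd y) • y)) :=
  stmt_1_general d r γd hγd hprob hmom Q hQ x
end

section
/- Let $\mu, \nu$ be probability measures on $\mathbb{R}^d$ and let $\mu_k, \nu_k$ be sequences of probability measures converging in distribution to $\mu$ and $\nu$ respectively, with the supports of $\mu$ and of each $\mu_k$ open. Suppose there exist maps $T_k : \mathbb{R}^d \to \mathbb{R}^d$ with $(T_k)_\# \mu_k = \nu_k$ and each $T_k$ Lipschitz with constant at most $C$. Then there exists a map $T : \mathbb{R}^d \to \mathbb{R}^d$, Lipschitz with constant at most $C$, such that $T_\# \mu = \nu$. -/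
/-!
The support of `μ` is closed, nonempty and open, hence all of the connected space `ℝ^d`.
So every ball `B(x, 1)` carries `μk`-mass bounded below for large `k`, while by tightness
of `(νk)` all but a little of the `νk`-mass lies in a fixed compact set `K`.
So `T k` maps some point of `B(x, 1)` into `K`, and `T k x` stays in the compact set
`cthickening C K`. Along an ultrafilter finer than `atTop` the maps `T k` therefore converge
pointwise to a `C`-Lipschitz map `Tlim`, and, being equi-Lipschitz, uniformly on compact sets.
With the tightness of `(μk)` this gives `(T k)#μk → Tlim#μ` weakly along the ultrafilter; since
`(T k)#μk = νk → ν`, uniqueness of weak limits yields `Tlim#μ = ν`.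
-/

open MeasureTheory Filter Topology

/-- The topological support of a measure: points all of whose open neighbourhoods
have positive measure. -/
def measSupport {α : Type*} [TopologicalSpace α] [MeasurableSpace α]
    (μ : MeasureTheory.Measure α) : Set α :=
  {x | ∀ U : Set α, IsOpen U → x ∈ U → μ U ≠ 0}

open Metric Set
open scoped NNReal BoundedContinuousFunction

lemma measSupport_eq_support {X : Type*} [TopologicalSpace X] [MeasurableSpace X]
    (μ : Measure X) : measSupport μ = μ.support := by
  ext x
  simp only [measSupport, Measure.support_eq_forall_isOpen, mem_ofPred_eq, pos_iff_ne_zero]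
  exact forall_congr' fun _ ↦ forall_comm

lemma ContinuousMap.tendsto_of_lipschitzWith {ι X Y : Type*} {l : Filter ι}
    [PseudoMetricSpace X] [PseudoMetricSpace Y] {T : ι → C(X, Y)} {T₀ : C(X, Y)} {C : ℝ≥0}
    (hT : ∀ i, LipschitzWith C (T i)) (h : ∀ x, Tendsto (T · x) l (𝓝 (T₀ x))) :
    Tendsto T l (𝓝 T₀) := by
  have hequi : Equicontinuous (fun i ↦ ⇑(T i)) :=
    (LipschitzWith.uniformEquicontinuous _ C hT).equicontinuous
  rw [ContinuousMap.tendsto_iff_forall_isCompact_tendstoUniformlyOn]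
  exact UniformOnFun.tendsto_iff_tendstoUniformlyOn.1 <|
    (EquicontinuousOn.tendsto_uniformOnFun_iff_pi (𝔖 := {K | IsCompact K}) (fun _ ↦ id)
      (sUnion_eq_univ_iff.2 fun x ↦ ⟨{x}, isCompact_singleton, rfl⟩)
      (fun K _ ↦ hequi.equicontinuousOn K) l T₀).2 (tendsto_pi_nhds.2 h)

lemma BoundedContinuousFunction.norm_integral_le_of_norm_le_on {X : Type*} [TopologicalSpace X]
    [MeasurableSpace X] [OpensMeasurableSpace X] (μ : Measure X) [IsProbabilityMeasure μ]
    (g : X →ᵇ ℝ) {K : Set X} (hK : MeasurableSet K) {δ : ℝ} (hδ : 0 ≤ δ)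
    (hg : ∀ x ∈ K, ‖g x‖ ≤ δ) :
    ‖∫ x, g x ∂μ‖ ≤ δ + ‖g‖ * μ.real Kᶜ := by
  rw [← integral_add_compl hK (g.integrable μ)]
  refine (norm_add_le _ _).trans (add_le_add ?_ ?_)
  · calc ‖∫ x in K, g x ∂μ‖ ≤ δ * μ.real K :=
          norm_setIntegral_le_of_norm_le_const (measure_lt_top _ _) hg
      _ ≤ δ := mul_le_of_le_one_right hδ measureReal_le_one
  · exact norm_setIntegral_le_of_norm_le_const (measure_lt_top _ _) fun x _ ↦ g.norm_coe_le_norm x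

namespace MeasureTheory

lemma Measure.support_eq_univ_of_isOpen {X : Type*} [TopologicalSpace X] [MeasurableSpace X]
    [HereditarilyLindelofSpace X] [PreconnectedSpace X] {μ : Measure X} (hμ : μ ≠ 0)
    (h : IsOpen μ.support) : μ.support = univ :=
  IsClopen.eq_univ ⟨isClosed_support, h⟩ (nonempty_support hμ)

lemma isTightMeasureSet_range_of_tendsto {X : Type*} [PseudoMetricSpace X] [MeasurableSpace X]
    [BorelSpace X] [SecondCountableTopology X] [CompleteSpace X]
    {μs : ℕ → ProbabilityMeasure X} {μ : ProbabilityMeasure X} (h : Tendsto μs atTop (𝓝 μ)) :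
    IsTightMeasureSet (range fun k ↦ (μs k : Measure X)) := by
  refine (isTightMeasureSet_of_isCompact_closure h.isCompact_insert_range.closure).subset ?_
  rintro _ ⟨k, rfl⟩
  exact ⟨μs k, mem_insert_of_mem _ (mem_range_self k), rfl⟩

lemma exists_isCompact_eventually_mem_of_lipschitzWith {ι X Y : Type*} {l : Filter ι}
    [PseudoMetricSpace X] [MeasurableSpace X] [OpensMeasurableSpace X]
    [PseudoMetricSpace Y] [ProperSpace Y] [MeasurableSpace Y] [BorelSpace Y]
    {μs : ι → ProbabilityMeasure X} {μ : ProbabilityMeasure X} (hμ : Tendsto μs l (𝓝 μ))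
    {νs : ι → ProbabilityMeasure Y} (hν : IsTightMeasureSet (range fun i ↦ (νs i : Measure Y)))
    {T : ι → X → Y} {C : ℝ≥0} (hT : ∀ i, LipschitzWith C (T i))
    (hpush : ∀ i, Measure.map (T i) (μs i : Measure X) = νs i)
    {x : X} (hx : x ∈ (μ : Measure X).support) :
    ∃ L, IsCompact L ∧ ∀ᶠ i in l, T i x ∈ L := by
  have hball : 0 < (μ : Measure X) (ball x 1) :=
    (Measure.mem_support_iff_forall x).1 hx _ (ball_mem_nhds x one_pos)
  obtain ⟨K, hK, hνK⟩ := isTightMeasureSet_iff_exists_isCompact_measure_compl_le.1 hν _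
    (ENNReal.half_pos hball.ne')
  have hlarge : ∀ᶠ i in l, (μ : Measure X) (ball x 1) / 2 < (μs i : Measure X) (ball x 1) :=
    eventually_lt_of_lt_liminf <| (ENNReal.half_lt_self hball.ne' (measure_ne_top _ _)).trans_le
      (ProbabilityMeasure.le_liminf_measure_open_of_tendsto hμ isOpen_ball)
  refine ⟨cthickening C K, hK.cthickening, hlarge.mono fun i hi ↦ ?_⟩
  -- the ball carries more `μs i`-mass than `Kᶜ` carries `νs i`-mass
  obtain ⟨y, hy, hyK⟩ : ∃ y ∈ ball x 1, T i y ∈ K := by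
    by_contra! h
    refine hi.not_ge ((measure_mono fun y hy ↦ h y hy).trans ?_)
    calc (μs i : Measure X) (T i ⁻¹' Kᶜ)
        ≤ Measure.map (T i) (μs i : Measure X) Kᶜ :=
          Measure.le_map_apply (hT i).continuous.aemeasurable _
      _ ≤ _ := hpush i ▸ hνK _ (mem_range_self i)
  refine mem_cthickening_of_dist_le _ _ _ _ hyK ?_
  calc dist (T i x) (T i y) ≤ C * dist x y := (hT i).dist_le_mul x y
    _ ≤ C := mul_le_of_le_one_right C.coe_nonneg (mem_ball'.1 hy).le

lemma tendsto_integral_zero_of_isTightMeasureSet {ι X : Type*} {l : Filter ι}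
    [TopologicalSpace X] [T2Space X] [MeasurableSpace X] [OpensMeasurableSpace X]
    {μs : ι → ProbabilityMeasure X} (hμs : IsTightMeasureSet (range fun i ↦ (μs i : Measure X)))
    {g : ι → X →ᵇ ℝ} {B : ℝ} (hB : ∀ i, ‖g i‖ ≤ B)
    (hg : ∀ K, IsCompact K → TendstoUniformlyOn (fun i ↦ ⇑(g i)) 0 l K) :
    Tendsto (fun i ↦ ∫ x, g i x ∂(μs i : Measure X)) l (𝓝 0) := by
  rw [Metric.tendsto_nhds]
  intro ε hε
  set η := ε / (2 * (|B| + 1))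
  have hη : 0 < η := by positivity
  obtain ⟨K, hK, hμK⟩ := isTightMeasureSet_iff_exists_isCompact_measure_compl_le.1 hμs _
    (ENNReal.ofReal_pos.2 hη)
  filter_upwards [Metric.tendstoUniformlyOn_iff.1 (hg K hK) (ε / 2) (half_pos hε)] with i hi
  have hgK : ∀ x ∈ K, ‖g i x‖ ≤ ε / 2 := fun x hx ↦ by
    simpa [dist_comm] using (hi x hx).le
  have hKc : (μs i : Measure X).real Kᶜ ≤ η :=
    ENNReal.toReal_le_of_le_ofReal hη.le (hμK _ (mem_range_self i))
  rw [dist_zero_right]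
  calc ‖∫ x, g i x ∂(μs i : Measure X)‖
      ≤ ε / 2 + ‖g i‖ * (μs i : Measure X).real Kᶜ :=
        (g i).norm_integral_le_of_norm_le_on _ hK.measurableSet (half_pos hε).le hgK
    _ ≤ ε / 2 + |B| * η := by gcongr; exact (hB i).trans (le_abs_self B)
    _ < ε / 2 + (|B| + 1) * η := by gcongr; exact lt_add_one _
    _ = ε := by simp only [η]; field_simp; ring

lemma ProbabilityMeasure.tendsto_integral_of_tendstoUniformlyOn {ι X : Type*} {l : Filter ι}
    [TopologicalSpace X] [T2Space X] [MeasurableSpace X] [OpensMeasurableSpace X]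
    {μs : ι → ProbabilityMeasure X} {μ : ProbabilityMeasure X} (hμ : Tendsto μs l (𝓝 μ))
    (hμs : IsTightMeasureSet (range fun i ↦ (μs i : Measure X)))
    {g : ι → X →ᵇ ℝ} {g₀ : X →ᵇ ℝ} {B : ℝ} (hB : ∀ i, ‖g i‖ ≤ B)
    (hg : ∀ K, IsCompact K → TendstoUniformlyOn (fun i ↦ ⇑(g i)) g₀ l K) :
    Tendsto (fun i ↦ ∫ x, g i x ∂(μs i : Measure X)) l (𝓝 (∫ x, g₀ x ∂(μ : Measure X))) := by
  have hdiff := tendsto_integral_zero_of_isTightMeasureSet hμs (g := fun i ↦ g i - g₀)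
    (fun i ↦ (norm_sub_le _ _).trans (add_le_add_left (hB i) _)) fun K hK ↦
      Metric.tendstoUniformlyOn_iff.2 fun ε hε ↦
        (Metric.tendstoUniformlyOn_iff.1 (hg K hK) ε hε).mono fun i hi x hx ↦ by
          simpa [Real.dist_eq, abs_sub_comm] using hi x hx
  simpa [integral_sub ((g _).integrable _) (g₀.integrable _)] using
    hdiff.add (tendsto_iff_forall_integral_tendsto.1 hμ g₀)

lemma ProbabilityMeasure.tendsto_map_of_tendsto_continuousMap {ι X Y : Type*} {l : Filter ι}
    [TopologicalSpace X] [T2Space X] [MeasurableSpace X] [OpensMeasurableSpace X]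
    [TopologicalSpace Y] [MeasurableSpace Y] [BorelSpace Y]
    {μs : ι → ProbabilityMeasure X} {μ : ProbabilityMeasure X} (hμ : Tendsto μs l (𝓝 μ))
    (hμs : IsTightMeasureSet (range fun i ↦ (μs i : Measure X)))
    {T : ι → C(X, Y)} {T₀ : C(X, Y)} (hT : Tendsto T l (𝓝 T₀)) :
    Tendsto (fun i ↦ (μs i).map (T i).continuous.aemeasurable) l
      (𝓝 (μ.map T₀.continuous.aemeasurable)) := by
  rw [tendsto_iff_forall_integral_tendsto]
  intro f
  have hfT := (ContinuousMap.continuous_postcomp (f : C(Y, ℝ))).continuousAt.tendsto.comp hT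
  simp only [toMeasure_map]
  rw [integral_map T₀.continuous.aemeasurable f.continuous.aestronglyMeasurable]
  simp_rw [integral_map (T _).continuous.aemeasurable f.continuous.aestronglyMeasurable]
  exact tendsto_integral_of_tendstoUniformlyOn hμ hμs
    (g := fun i ↦ f.compContinuous (T i)) (g₀ := f.compContinuous T₀)
    (fun i ↦ f.norm_compContinuous_le _)
    (ContinuousMap.tendsto_iff_forall_isCompact_tendstoUniformlyOn.1 hfT)

end MeasureTheory

theorem stmt_2_general (d : ℕ) (C : NNReal)
    (μ ν : ProbabilityMeasure (EuclideanSpace ℝ (Fin d)))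
    (μk νk : ℕ → ProbabilityMeasure (EuclideanSpace ℝ (Fin d)))
    (hμ : Tendsto μk atTop (𝓝 μ))
    (hν : Tendsto νk atTop (𝓝 ν))
    (hsuppμ : IsOpen (measSupport (μ : Measure (EuclideanSpace ℝ (Fin d)))))
    (T : ℕ → EuclideanSpace ℝ (Fin d) → EuclideanSpace ℝ (Fin d))
    (hTLip : ∀ k, LipschitzWith C (T k))
    (hTpush : ∀ k, Measure.map (T k) (μk k : Measure (EuclideanSpace ℝ (Fin d)))
      = (νk k : Measure (EuclideanSpace ℝ (Fin d)))) :
    ∃ Tlim : EuclideanSpace ℝ (Fin d) → EuclideanSpace ℝ (Fin d),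
      LipschitzWith C Tlim ∧
      Measure.map Tlim (μ : Measure (EuclideanSpace ℝ (Fin d)))
        = (ν : Measure (EuclideanSpace ℝ (Fin d))) := by
  rw [measSupport_eq_support] at hsuppμ
  have hfull := Measure.support_eq_univ_of_isOpen (μ := μ.toMeasure)
    (IsProbabilityMeasure.ne_zero _) hsuppμ
  let U : Ultrafilter ℕ := .of atTop
  have hU : (U : Filter ℕ) ≤ atTop := Ultrafilter.of_le _
  have hlim : ∀ x, ∃ y, Tendsto (T · x) U (𝓝 y) := fun x ↦ by
    obtain ⟨L, hL, hTL⟩ := exists_isCompact_eventually_mem_of_lipschitzWith hμ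
      (isTightMeasureSet_range_of_tendsto hν) hTLip hTpush (hfull ▸ mem_univ x)
    obtain ⟨y, -, hy⟩ := hL.ultrafilter_le_nhds' (U.map (T · x)) (hU hTL)
    exact ⟨y, hy⟩
  choose Tlim hTlim using hlim
  have hLip : LipschitzWith C Tlim := (isClosed_setOfPred_lipschitzWith C).mem_of_tendsto
    (tendsto_pi_nhds.2 hTlim) (.of_forall hTLip)
  refine ⟨Tlim, hLip, ?_⟩
  let Tc : ℕ → C(EuclideanSpace ℝ (Fin d), EuclideanSpace ℝ (Fin d)) :=
    fun k ↦ ⟨T k, (hTLip k).continuous⟩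
  have hmap := ProbabilityMeasure.tendsto_map_of_tendsto_continuousMap (hμ.mono_left hU)
    (isTightMeasureSet_range_of_tendsto hμ)
    (ContinuousMap.tendsto_of_lipschitzWith (T := Tc) (T₀ := ⟨Tlim, hLip.continuous⟩) hTLip hTlim)
  have hνk : ∀ k, (μk k).map (Tc k).continuous.aemeasurable = νk k := fun k ↦
    Subtype.ext ((ProbabilityMeasure.toMeasure_map _ _).trans (hTpush k))
  simp only [hνk] at hmap
  simpa using congrArg ProbabilityMeasure.toMeasure (tendsto_nhds_unique hmap (hν.mono_left hU))

/-- stability of Lipschitz transport maps under weak convergence. -/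
theorem stmt_2 (d : ℕ) (C : NNReal) (hC : 0 < C)
    (μ ν : ProbabilityMeasure (EuclideanSpace ℝ (Fin d)))
    (μk νk : ℕ → ProbabilityMeasure (EuclideanSpace ℝ (Fin d)))
    (hμ : Tendsto μk atTop (𝓝 μ))
    (hν : Tendsto νk atTop (𝓝 ν))
    (hsuppμ : IsOpen (measSupport (μ : Measure (EuclideanSpace ℝ (Fin d)))))
    (hsuppμk : ∀ k, IsOpen (measSupport (μk k : Measure (EuclideanSpace ℝ (Fin d)))))
    (T : ℕ → EuclideanSpace ℝ (Fin d) → EuclideanSpace ℝ (Fin d))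
    (hTLip : ∀ k, LipschitzWith C (T k))
    (hTpush : ∀ k, Measure.map (T k) (μk k : Measure (EuclideanSpace ℝ (Fin d)))
      = (νk k : Measure (EuclideanSpace ℝ (Fin d)))) :
    ∃ Tlim : EuclideanSpace ℝ (Fin d) → EuclideanSpace ℝ (Fin d),
      LipschitzWith C Tlim ∧
      Measure.map Tlim (μ : Measure (EuclideanSpace ℝ (Fin d)))
        = (ν : Measure (EuclideanSpace ℝ (Fin d))) :=
  stmt_2_general d C μ ν μk νk hμ hν hsuppμ T hTLip hTpush
end

section
/- Let $\mu$ be a probability measure on $\mathbb{R}^d$ whose density satisfies $d\mu \le M\, d\varphi$ where $\varphi$ is a Gaussian with mean $m$ and covariance $\sigma^2 \mathrm{Id}$. Let $f : \mathbb{R}^d \to \mathbb{R}^k$ satisfy the Hölder-log bound $\|f(y) - f(m)\| \le \|y - m\|^{\delta} \log\big((\|y-m\| \wedge \tfrac12)^{-1}\big)^{-\theta}$ for some $\delta \in (0,1]$, $\theta > 0$. Then $\int \|f(y) - f(m)\|^2 \, d\mu(y) \le C\, \sigma^{2\delta} \log\big((\sigma^2 \wedge \tfrac12)^{-1}\big)^{-2\theta}$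 for a constant $C$ depending only on $M$, $d$, $\delta$, $\theta$. -/
/-!
Write `ℓ(x) = log((x ∧ ½)⁻¹)`. Comparing `log σ⁻¹ = log r⁻¹ + log(r/σ) ≤ ℓ(r) + r/σ` gives
`ℓ(σ²) ≤ 6 ℓ(r) (1 + r/σ)`, so the modulus is controlled at scale `σ`:
`r^δ ℓ(r)^{-θ} ≤ 6^θ σ^δ ℓ(σ²)^{-θ} (1 + r/σ)^n` for every integer `n ≥ δ + θ`.
Squaring and integrating against `μ ≤ M φ` leaves the Gaussian moment `∫ (1 + ‖y - m‖/σ)^{2n} dφ`,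
which does not depend on `σ` or `m`: `(1 + t)^N e^{-t²/2} ≤ N! e² e^{-t²/4}`, and
`(2πσ²)^{-d/2} ∫ e^{-‖y - m‖²/(4σ²)} dy = 2^{d/2}`.
-/

open MeasureTheory Real Set
open scoped Nat

noncomputable def truncLogInv (x : ℝ) : ℝ := Real.log (min x (1 / 2))⁻¹

lemma truncLogInv_eq_max {x : ℝ} (hx : 0 < x) :
    truncLogInv x = max (Real.log x⁻¹) (Real.log 2) := by
  rcases le_total x (1 / 2) with h | h
  · rw [truncLogInv, min_eq_left h, max_eq_left]
    exact Real.log_le_log two_pos ((le_inv_comm₀ two_pos hx).2 (by simpa using h))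
  · rw [truncLogInv, min_eq_right h, max_eq_right, one_div, inv_inv]
    exact Real.log_le_log (inv_pos.2 hx) ((inv_le_comm₀ hx two_pos).2 (by simpa using h))

lemma log_two_le_truncLogInv {x : ℝ} (hx : 0 < x) : Real.log 2 ≤ truncLogInv x :=
  truncLogInv_eq_max hx ▸ le_max_right _ _

lemma log_inv_le_truncLogInv {x : ℝ} (hx : 0 < x) : Real.log x⁻¹ ≤ truncLogInv x :=
  truncLogInv_eq_max hx ▸ le_max_left _ _

lemma truncLogInv_pos {x : ℝ} (hx : 0 < x) : 0 < truncLogInv x :=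
  (Real.log_pos one_lt_two).trans_le (log_two_le_truncLogInv hx)

lemma truncLogInv_nonneg {x : ℝ} (hx : 0 ≤ x) : 0 ≤ truncLogInv x := by
  rcases hx.eq_or_lt with rfl | hx
  · simp [truncLogInv]
  · exact (truncLogInv_pos hx).le

lemma truncLogInv_sq_le {σ r : ℝ} (hσ : 0 < σ) (hr : 0 < r) :
    truncLogInv (σ ^ 2) ≤ 6 * truncLogInv r * (1 + r / σ) := by
  have hℓ2 := log_two_le_truncLogInv hr
  have hℓr := log_inv_le_truncLogInv hr
  have hlog2 : 1 / 2 < Real.log 2 := by linarith [Real.log_two_gt_d9]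
  have ht : 0 < r / σ := div_pos hr hσ
  have hσr : Real.log σ⁻¹ ≤ Real.log r⁻¹ + r / σ := by
    have hsplit : Real.log σ⁻¹ = Real.log r⁻¹ + Real.log (r / σ) := by
      rw [Real.log_div hr.ne' hσ.ne', Real.log_inv, Real.log_inv]; ring
    linarith [Real.log_le_sub_one_of_pos ht]
  have hσ2 : Real.log (σ ^ 2)⁻¹ = 2 * Real.log σ⁻¹ := by
    rw [← inv_pow, Real.log_pow]; push_cast; ring
  rw [truncLogInv_eq_max (by positivity), max_le_iff, hσ2]
  constructor <;> nlinarith [mul_le_mul_of_nonneg_right hℓ2 ht.le]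

lemma rpow_mul_truncLogInv_rpow_le {δ θ σ r : ℝ} {n : ℕ} (hδ : 0 < δ) (hθ : 0 ≤ θ)
    (hn : δ + θ ≤ n) (hσ : 0 < σ) (hr : 0 ≤ r) :
    r ^ δ * truncLogInv r ^ (-θ) ≤
      6 ^ θ * σ ^ δ * truncLogInv (σ ^ 2) ^ (-θ) * (1 + r / σ) ^ n := by
  have hL := truncLogInv_pos (pow_pos hσ 2)
  rcases hr.eq_or_lt with rfl | hr
  · rw [Real.zero_rpow hδ.ne', zero_mul]
    have := Real.rpow_nonneg hL.le (-θ)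
    positivity
  set L := truncLogInv (σ ^ 2)
  set t := r / σ with ht_def
  have ht : 0 < t := div_pos hr hσ
  have hℓ : L * (6 * (1 + t))⁻¹ ≤ truncLogInv r := by
    rw [← div_eq_mul_inv, div_le_iff₀ (by positivity)]
    linarith [truncLogInv_sq_le hσ hr]
  have hlog : truncLogInv r ^ (-θ) ≤ 6 ^ θ * L ^ (-θ) * (1 + t) ^ θ := by
    calc truncLogInv r ^ (-θ) ≤ (L * (6 * (1 + t))⁻¹) ^ (-θ) :=
          Real.rpow_le_rpow_of_nonpos (by positivity) hℓ (neg_nonpos.2 hθ)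
      _ = 6 ^ θ * L ^ (-θ) * (1 + t) ^ θ := by
          have h6 : 0 ≤ 6 * (1 + t) := by positivity
          rw [Real.mul_rpow hL.le (inv_nonneg.2 h6), Real.inv_rpow h6, Real.rpow_neg h6, inv_inv,
            Real.mul_rpow (by norm_num) (by positivity)]
          ring
  have hpow : r ^ δ ≤ σ ^ δ * (1 + t) ^ δ := by
    rw [show r = σ * t by rw [ht_def, mul_div_cancel₀ _ hσ.ne'], Real.mul_rpow hσ.le ht.le]
    gcongr
    linarith
  calc r ^ δ * truncLogInv r ^ (-θ)
      ≤ σ ^ δ * (1 + t) ^ δ * (6 ^ θ * L ^ (-θ) * (1 + t) ^ θ) :=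
        mul_le_mul hpow hlog (Real.rpow_nonneg (truncLogInv_pos hr).le _) (by positivity)
      _ = 6 ^ θ * σ ^ δ * L ^ (-θ) * (1 + t) ^ (δ + θ) := by
        rw [Real.rpow_add (by positivity)]; ring
      _ ≤ 6 ^ θ * σ ^ δ * L ^ (-θ) * (1 + t) ^ n := by
        have : (1 + t) ^ (δ + θ) ≤ (1 + t) ^ n := by
          rw [← Real.rpow_natCast]
          exact Real.rpow_le_rpow_of_exponent_le (by linarith) hn
        gcongr

lemma sq_rpow_mul_truncLogInv_rpow_le {δ θ σ r : ℝ} {n : ℕ} (hδ : 0 < δ) (hθ : 0 ≤ θ)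
    (hn : δ + θ ≤ n) (hσ : 0 < σ) (hr : 0 ≤ r) :
    (r ^ δ * truncLogInv r ^ (-θ)) ^ 2 ≤
      36 ^ θ * σ ^ (2 * δ) * truncLogInv (σ ^ 2) ^ (-(2 * θ)) * (1 + r / σ) ^ (2 * n) := by
  have hL := truncLogInv_pos (pow_pos hσ 2)
  have hsq : (6 ^ θ * σ ^ δ * truncLogInv (σ ^ 2) ^ (-θ)) ^ 2 =
      36 ^ θ * σ ^ (2 * δ) * truncLogInv (σ ^ 2) ^ (-(2 * θ)) := by
    rw [mul_pow, mul_pow, ← Real.rpow_mul_natCast (by norm_num), ← Real.rpow_mul_natCast hσ.le,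
      ← Real.rpow_mul_natCast hL.le, show (36 : ℝ) = 6 ^ (2 : ℝ) by norm_num,
      ← Real.rpow_mul (by norm_num)]
    ring_nf
  rw [pow_mul', ← hsq, ← mul_pow]
  have := truncLogInv_nonneg hr
  exact pow_le_pow_left₀ (by positivity) (rpow_mul_truncLogInv_rpow_le hδ hθ hn hσ hr) 2

lemma one_add_pow_mul_exp_le {t : ℝ} (ht : 0 ≤ 1 + t) (n : ℕ) :
    (1 + t) ^ n * Real.exp (-t ^ 2 / 2) ≤ n ! * Real.exp 2 * Real.exp (-t ^ 2 / 4) := by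
  have hpow : (1 + t) ^ n ≤ n ! * Real.exp (1 + t) := by
    have := Real.pow_div_factorial_le_exp _ ht n
    rwa [div_le_iff₀ (by positivity), mul_comm] at this
  have hexp : Real.exp (1 + t) * Real.exp (-t ^ 2 / 2) ≤ Real.exp 2 * Real.exp (-t ^ 2 / 4) := by
    rw [← Real.exp_add, ← Real.exp_add, Real.exp_le_exp]
    nlinarith [sq_nonneg (t - 2)]
  calc (1 + t) ^ n * Real.exp (-t ^ 2 / 2)
      ≤ n ! * (Real.exp (1 + t) * Real.exp (-t ^ 2 / 2)) := by
        rw [← mul_assoc]; gcongr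
    _ ≤ n ! * (Real.exp 2 * Real.exp (-t ^ 2 / 4)) := by gcongr
    _ = n ! * Real.exp 2 * Real.exp (-t ^ 2 / 4) := by ring

section Gaussian

open Module

variable {V : Type*} [NormedAddCommGroup V] [InnerProductSpace ℝ V] [FiniteDimensional ℝ V]
  [MeasurableSpace V] [BorelSpace V]

lemma lintegral_exp_neg_mul_norm_sub_sq {b : ℝ} (hb : 0 < b) (m : V) :
    ∫⁻ y, ENNReal.ofReal (Real.exp (-b * ‖y - m‖ ^ 2)) =
      ENNReal.ofReal ((π / b) ^ (finrank ℝ V / 2 : ℝ)) := by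
  have hint := GaussianFourier.integral_rexp_neg_mul_sq_norm (V := V) hb
  rw [lintegral_sub_right_eq_self (fun v ↦ ENNReal.ofReal (Real.exp (-b * ‖v‖ ^ 2))) m, ← hint,
    ofReal_integral_eq_lintegral_ofReal]
  · exact Integrable.of_integral_ne_zero (by rw [hint]; positivity)
  · exact Filter.Eventually.of_forall fun v ↦ (Real.exp_pos _).le

noncomputable def isotropicGaussianPDF (σ : ℝ) (m y : V) : ℝ :=
  (2 * π * σ ^ 2) ^ (-(finrank ℝ V : ℝ) / 2) * Real.exp (-‖y - m‖ ^ 2 / (2 * σ ^ 2))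

lemma lintegral_one_add_pow_le {σ : ℝ} (hσ : 0 < σ) (m : V) (n : ℕ) :
    ∫⁻ y, ENNReal.ofReal ((1 + ‖y - m‖ / σ) ^ n)
        ∂(volume.withDensity fun y ↦ ENNReal.ofReal (isotropicGaussianPDF σ m y)) ≤
      ENNReal.ofReal (n ! * Real.exp 2 * 2 ^ (finrank ℝ V / 2 : ℝ)) := by
  set c : ℝ := (2 * π * σ ^ 2) ^ (-(finrank ℝ V : ℝ) / 2) with hc_def
  set b : ℝ := (4 * σ ^ 2)⁻¹ with hb_def
  have hpt : ∀ y, ENNReal.ofReal (isotropicGaussianPDF σ m y) *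
      ENNReal.ofReal ((1 + ‖y - m‖ / σ) ^ n) ≤
        ENNReal.ofReal (c * (n ! * Real.exp 2)) * ENNReal.ofReal (Real.exp (-b * ‖y - m‖ ^ 2)) := by
    intro y
    rw [← ENNReal.ofReal_mul (by unfold isotropicGaussianPDF; positivity),
      ← ENNReal.ofReal_mul (by positivity)]
    apply ENNReal.ofReal_le_ofReal
    have key := one_add_pow_mul_exp_le (t := ‖y - m‖ / σ) (by positivity) n
    have e1 : -(‖y - m‖ / σ) ^ 2 / 2 = -‖y - m‖ ^ 2 / (2 * σ ^ 2) := by field_simp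
    have e2 : -(‖y - m‖ / σ) ^ 2 / 4 = -b * ‖y - m‖ ^ 2 := by rw [hb_def]; field_simp
    rw [e1, e2] at key
    calc isotropicGaussianPDF σ m y * (1 + ‖y - m‖ / σ) ^ n
        = c * ((1 + ‖y - m‖ / σ) ^ n * Real.exp (-‖y - m‖ ^ 2 / (2 * σ ^ 2))) := by
          rw [isotropicGaussianPDF]; ring
      _ ≤ c * (n ! * Real.exp 2 * Real.exp (-b * ‖y - m‖ ^ 2)) := by gcongr
      _ = c * (n ! * Real.exp 2) * Real.exp (-b * ‖y - m‖ ^ 2) := by ring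
  have hc : c * (π / b) ^ ((finrank ℝ V : ℝ) / 2) = 2 ^ ((finrank ℝ V : ℝ) / 2) := by
    have h2 : 0 < 2 * π * σ ^ 2 := by positivity
    rw [show π / b = 2 * (2 * π * σ ^ 2) by rw [hb_def]; field_simp; norm_num,
      Real.mul_rpow two_pos.le h2.le, hc_def, neg_div, Real.rpow_neg h2.le]
    field_simp
  calc ∫⁻ y, ENNReal.ofReal ((1 + ‖y - m‖ / σ) ^ n)
        ∂(volume.withDensity fun y ↦ ENNReal.ofReal (isotropicGaussianPDF σ m y))
      = ∫⁻ y, ENNReal.ofReal (isotropicGaussianPDF σ m y) *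
          ENNReal.ofReal ((1 + ‖y - m‖ / σ) ^ n) := by
        rw [lintegral_withDensity_eq_lintegral_mul _ (by unfold isotropicGaussianPDF; fun_prop)
          (by fun_prop)]
        rfl
    _ ≤ ∫⁻ y, ENNReal.ofReal (c * (n ! * Real.exp 2)) *
          ENNReal.ofReal (Real.exp (-b * ‖y - m‖ ^ 2)) := lintegral_mono hpt
    _ = ENNReal.ofReal (n ! * Real.exp 2 * 2 ^ (finrank ℝ V / 2 : ℝ)) := by
        rw [lintegral_const_mul' _ _ ENNReal.ofReal_ne_top,
          lintegral_exp_neg_mul_norm_sub_sq (by positivity), ← ENNReal.ofReal_mul (by positivity),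
          ← hc]
        congr 1; ring

lemma lintegral_one_add_pow_le_of_le_smul {μ : Measure V} {M σ : ℝ} (hM : 0 ≤ M) (hσ : 0 < σ)
    {m : V} (hμ : μ ≤ ENNReal.ofReal M •
      volume.withDensity fun y ↦ ENNReal.ofReal (isotropicGaussianPDF σ m y)) (n : ℕ) :
    ∫⁻ y, ENNReal.ofReal ((1 + ‖y - m‖ / σ) ^ n) ∂μ ≤
      ENNReal.ofReal (M * (n ! * Real.exp 2 * 2 ^ (finrank ℝ V / 2 : ℝ))) := by
  grw [lintegral_mono' hμ le_rfl, lintegral_smul_measure, smul_eq_mul,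
    lintegral_one_add_pow_le hσ m n, ENNReal.ofReal_mul hM]

end Gaussian

lemma norm_integral_le_of_norm_le_mul {α G : Type*} [MeasurableSpace α] [NormedAddCommGroup G]
    [NormedSpace ℝ G] {μ : Measure α} {g : α → G} {w : α → ℝ} {A K : ℝ} (hA : 0 ≤ A)
    (hK : 0 ≤ K) (hg : ∀ x, ‖g x‖ ≤ A * w x)
    (hw : ∫⁻ x, ENNReal.ofReal (w x) ∂μ ≤ ENNReal.ofReal K) :
    ‖∫ x, g x ∂μ‖ ≤ A * K := by
  refine (norm_integral_le_lintegral_norm g).trans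
    (ENNReal.toReal_le_of_le_ofReal (by positivity) ?_)
  calc ∫⁻ x, ENNReal.ofReal ‖g x‖ ∂μ
      ≤ ∫⁻ x, ENNReal.ofReal A * ENNReal.ofReal (w x) ∂μ := by
        refine lintegral_mono fun x ↦ ?_
        rw [← ENNReal.ofReal_mul hA]
        exact ENNReal.ofReal_le_ofReal (hg x)
    _ = ENNReal.ofReal A * ∫⁻ x, ENNReal.ofReal (w x) ∂μ :=
        lintegral_const_mul' _ _ ENNReal.ofReal_ne_top
    _ ≤ ENNReal.ofReal (A * K) := by grw [hw, ENNReal.ofReal_mul hA]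

/-- concentration of a Hölder-log function around the Gaussian mean,
under a measure dominated by a Gaussian. -/
theorem stmt_9 (M : ℝ) (hM : 0 < M) (d : ℕ) (δ θ : ℝ)
    (hδ : δ ∈ Ioc (0 : ℝ) 1) (hθ : 0 < θ) :
    ∃ C > 0, ∀ (k : ℕ) (μ : Measure (EuclideanSpace ℝ (Fin d)))
      (m : EuclideanSpace ℝ (Fin d)) (σ : ℝ)
      (f : EuclideanSpace ℝ (Fin d) → EuclideanSpace ℝ (Fin k)),
      0 < σ → IsProbabilityMeasure μ →
      μ ≤ ENNReal.ofReal M •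
        (volume.withDensity fun y => ENNReal.ofReal
          ((2 * π * σ ^ 2) ^ (-(d : ℝ) / 2) *
            Real.exp (-‖y - m‖ ^ 2 / (2 * σ ^ 2)))) →
      (∀ y, ‖f y - f m‖ ≤
        ‖y - m‖ ^ δ * Real.log ((min ‖y - m‖ (1 / 2))⁻¹) ^ (-θ)) →
      ∫ y, ‖f y - f m‖ ^ 2 ∂μ
        ≤ C * σ ^ (2 * δ) * Real.log ((min (σ ^ 2) (1 / 2))⁻¹) ^ (-(2 * θ)) := by
  set n := ⌈δ + θ⌉₊
  refine ⟨M * 36 ^ θ * ((2 * n) ! * Real.exp 2 * 2 ^ (d / 2 : ℝ)), by positivity, ?_⟩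
  intro k μ m σ f hσ _ hμ hf
  change ∫ y, ‖f y - f m‖ ^ 2 ∂μ ≤ _ * σ ^ (2 * δ) * truncLogInv (σ ^ 2) ^ (-(2 * θ))
  have hL := truncLogInv_pos (pow_pos hσ 2)
  have hpt : ∀ y, ‖‖f y - f m‖ ^ 2‖ ≤
      36 ^ θ * σ ^ (2 * δ) * truncLogInv (σ ^ 2) ^ (-(2 * θ)) * (1 + ‖y - m‖ / σ) ^ (2 * n) := by
    intro y
    rw [norm_pow, norm_norm]
    exact (pow_le_pow_left₀ (norm_nonneg _) (hf y) 2).trans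
      (sq_rpow_mul_truncLogInv_rpow_le hδ.1 hθ.le (Nat.le_ceil _) hσ (norm_nonneg _))
  have hμ' : μ ≤ ENNReal.ofReal M •
      volume.withDensity fun y ↦ ENNReal.ofReal (isotropicGaussianPDF σ m y) := by
    simp only [isotropicGaussianPDF, finrank_euclideanSpace_fin]
    exact hμ
  have hmom := lintegral_one_add_pow_le_of_le_smul hM.le hσ hμ' (2 * n)
  rw [finrank_euclideanSpace_fin] at hmom
  calc ∫ y, ‖f y - f m‖ ^ 2 ∂μ ≤ ‖∫ y, ‖f y - f m‖ ^ 2 ∂μ‖ := Real.le_norm_self _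
    _ ≤ _ := norm_integral_le_of_norm_le_mul (by positivity) (by positivity) hpt hmom
    _ = _ := by ring
end

section
/- Let $p$ be a compactly supported probability density on $\mathbb{R}^d$, absolutely continuous with respect to $\gamma_d$, with $Q_t r(x) > 0$ for all $t \in [0,1)$, $x$, where $r = p/\gamma_d$. Then for every $t \in [0,1)$ the velocity field $V(s,x) = \frac{1}{1-s^2}\int (y - sx)\, p^{s,x}(y)\, dy$ satisfies: (i) $\|V(s,x)\| \le \frac{R + \|x\|}{1-t^2}$ for all $s \in [0,t]$, where $R$ is such that $\mathrm{supp}(p) \subset B(0,R)$; and (ii) $\|\nabla_x V(s,x)\| \le \frac{C}{(1-t^2)^2}$ for a constant $C$ depending only on $R$. -/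
/-!
Put `σ = 1 - s²`. Expanding the square, the Gaussian kernel factors as
`φ^{s,x}(y) = c(s,x) · exp ⟪y, θ⟫ · exp (-‖y‖² / 2σ)` with `θ = (s / σ) x`, so `p^{s,x}` is the
exponential tilt by `θ` of the fixed finite measure `ν = exp (-‖y‖² / 2σ) r(y) dy`, which is
carried by the ball of radius `R`. Hence `V(s, x) = (m(θ) - s x) / σ`, where `m(θ)` is the mean
of the tilted measure and so has norm at most `R`. Differentiating under the integral,
`Dm(θ)` is the covariance of the tilted measure, of norm at most `2R²`, and the chain rule
gives `‖∇ₓV‖ ≤ (2R² s / σ + s) / σ ≤ (2R² + 1) / σ²`.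
-/

open MeasureTheory Real Set
open scoped RealInnerProductSpace

noncomputable section

section Tilt

variable {E F : Type*} [NormedAddCommGroup E] [InnerProductSpace ℝ E] [NormedAddCommGroup F]
  [NormedSpace ℝ F] {R : ℝ}

def laplaceTransform [MeasurableSpace E] (ν : Measure E) (θ : E) : ℝ := ∫ y, exp ⟪y, θ⟫ ∂ν

def tiltedMean [MeasurableSpace E] (ν : Measure E) (θ : E) : E :=
  (laplaceTransform ν θ)⁻¹ • ∫ y, exp ⟪y, θ⟫ • y ∂ν

lemma exp_inner_le {y : E} (hy : ‖y‖ ≤ R) (θ : E) : exp ⟪y, θ⟫ ≤ exp (R * ‖θ‖) :=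
  exp_le_exp.2 <| (real_inner_le_norm y θ).trans <|
    mul_le_mul_of_nonneg_right hy (norm_nonneg θ)

variable [MeasurableSpace E] [BorelSpace E] {ν : Measure E} [IsFiniteMeasure ν]

lemma integrable_exp_inner_smul (hν : ∀ᵐ y ∂ν, ‖y‖ ≤ R) {g : E → F}
    (hg : AEStronglyMeasurable g ν) {B : ℝ} (hgB : ∀ᵐ y ∂ν, ‖g y‖ ≤ B) (θ : E) :
    Integrable (fun y => exp ⟪y, θ⟫ • g y) ν := by
  refine .of_bound ((continuous_id.inner continuous_const).rexp.aestronglyMeasurable.smul hg)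
    (exp (R * ‖θ‖) * B) ?_
  filter_upwards [hν, hgB] with y hy hgy
  rw [norm_smul, norm_of_nonneg (exp_pos _).le]
  exact mul_le_mul (exp_inner_le hy θ) hgy (norm_nonneg _) (exp_pos _).le

lemma integrable_exp_inner (hν : ∀ᵐ y ∂ν, ‖y‖ ≤ R) (θ : E) :
    Integrable (fun y => exp ⟪y, θ⟫) ν := by
  simpa using integrable_exp_inner_smul hν (g := fun _ => (1 : ℝ)) aestronglyMeasurable_const
    (B := 1) (by simp) θ

lemma norm_integral_exp_inner_smul_le (hν : ∀ᵐ y ∂ν, ‖y‖ ≤ R) {g : E → F} {B : ℝ}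
    (hgB : ∀ᵐ y ∂ν, ‖g y‖ ≤ B) (θ : E) :
    ‖∫ y, exp ⟪y, θ⟫ • g y ∂ν‖ ≤ B * laplaceTransform ν θ := by
  calc ‖∫ y, exp ⟪y, θ⟫ • g y ∂ν‖ ≤ ∫ y, B * exp ⟪y, θ⟫ ∂ν := by
        refine norm_integral_le_of_norm_le ((integrable_exp_inner hν θ).const_mul B) ?_
        filter_upwards [hgB] with y hgy
        rw [norm_smul, norm_of_nonneg (exp_pos _).le, mul_comm]
        exact mul_le_mul_of_nonneg_right hgy (exp_pos _).le
    _ = B * laplaceTransform ν θ := integral_const_mul B _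

lemma laplaceTransform_pos [NeZero ν] (hν : ∀ᵐ y ∂ν, ‖y‖ ≤ R) (θ : E) :
    0 < laplaceTransform ν θ :=
  integral_exp_pos (integrable_exp_inner hν θ)

lemma norm_tiltedMean_le [NeZero ν] (hν : ∀ᵐ y ∂ν, ‖y‖ ≤ R) (θ : E) :
    ‖tiltedMean ν θ‖ ≤ R := by
  have hZ := laplaceTransform_pos hν θ
  rw [tiltedMean, norm_smul, norm_inv, norm_of_nonneg hZ.le, inv_mul_le_iff₀ hZ, mul_comm]
  exact norm_integral_exp_inner_smul_le hν hν θ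

lemma integral_exp_inner_smul_sub [CompleteSpace E] [SecondCountableTopology E] [NeZero ν]
    (hν : ∀ᵐ y ∂ν, ‖y‖ ≤ R) (θ a : E) :
    ∫ y, exp ⟪y, θ⟫ • (y - a) ∂ν = laplaceTransform ν θ • (tiltedMean ν θ - a) := by
  simp_rw [smul_sub]
  rw [integral_sub
    (integrable_exp_inner_smul hν (g := fun y => y) aestronglyMeasurable_id hν θ)
    ((integrable_exp_inner hν θ).smul_const a), integral_smul_const, tiltedMean,
    smul_inv_smul₀ (laplaceTransform_pos hν θ).ne']
  rfl

lemma integrable_exp_inner_smul_smulRight [SecondCountableTopology E]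
    (hν : ∀ᵐ y ∂ν, ‖y‖ ≤ R) {g : E → F} (hg : AEStronglyMeasurable g ν) {B : ℝ}
    (hgB : ∀ᵐ y ∂ν, ‖g y‖ ≤ B) (θ : E) :
    Integrable (fun y => exp ⟪y, θ⟫ • (innerSL ℝ y).smulRight (g y)) ν := by
  refine integrable_exp_inner_smul hν
    ((ContinuousLinearMap.smulRightL ℝ E F).continuous₂.comp_aestronglyMeasurable₂
      (innerSL ℝ (E := E)).continuous.aestronglyMeasurable hg) (B := R * B) ?_ θ
  filter_upwards [hν, hgB] with y hy hgy
  change ‖(innerSL ℝ y).smulRight (g y)‖ ≤ R * B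
  rw [ContinuousLinearMap.norm_smulRight_apply, innerSL_apply_norm]
  exact mul_le_mul hy hgy (norm_nonneg _) ((norm_nonneg y).trans hy)

lemma hasFDerivAt_integral_exp_inner_smul [SecondCountableTopology E]
    (hν : ∀ᵐ y ∂ν, ‖y‖ ≤ R) {g : E → F} (hg : AEStronglyMeasurable g ν) {B : ℝ}
    (hgB : ∀ᵐ y ∂ν, ‖g y‖ ≤ B) (θ : E) :
    HasFDerivAt (fun θ => ∫ y, exp ⟪y, θ⟫ • g y ∂ν)
      (∫ y, exp ⟪y, θ⟫ • (innerSL ℝ y).smulRight (g y) ∂ν) θ := by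
  have hderiv : ∀ y θ, HasFDerivAt (fun θ => exp ⟪y, θ⟫ • g y)
      (exp ⟪y, θ⟫ • (innerSL ℝ y).smulRight (g y)) θ := fun y θ => by
    refine (((innerSL ℝ y).hasFDerivAt (x := θ)).exp.smul_const (g y)).congr_fderiv ?_
    ext h
    simp [smul_smul]
  refine hasFDerivAt_integral_of_dominated_of_fderiv_le (Metric.ball_mem_nhds θ one_pos)
    (.of_forall fun θ => (integrable_exp_inner_smul hν hg hgB θ).aestronglyMeasurable)
    (integrable_exp_inner_smul hν hg hgB θ)
    (integrable_exp_inner_smul_smulRight hν hg hgB θ).aestronglyMeasurable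
    (bound := fun _ => exp (R * (‖θ‖ + 1)) * (R * B)) ?_ (integrable_const _)
    (.of_forall fun y θ _ => hderiv y θ)
  filter_upwards [hν, hgB] with y hy hgy θ' hθ'
  have hθ' : ‖θ'‖ ≤ ‖θ‖ + 1 := by
    have := norm_le_norm_add_norm_sub' θ' θ
    rw [Metric.mem_ball, dist_eq_norm] at hθ'
    linarith
  have hR : 0 ≤ R := (norm_nonneg y).trans hy
  rw [norm_smul, ContinuousLinearMap.norm_smulRight_apply, innerSL_apply_norm,
    norm_of_nonneg (exp_pos _).le]
  exact mul_le_mul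
    ((exp_inner_le hy θ').trans (exp_le_exp.2 (mul_le_mul_of_nonneg_left hθ' hR)))
    (mul_le_mul hy hgy (norm_nonneg _) hR) (by positivity) (exp_pos _).le

lemma integral_exp_inner_smul_smulRight_apply [SecondCountableTopology E]
    (hν : ∀ᵐ y ∂ν, ‖y‖ ≤ R) {g : E → F} (hg : AEStronglyMeasurable g ν) {B : ℝ}
    (hgB : ∀ᵐ y ∂ν, ‖g y‖ ≤ B) (θ h : E) :
    (∫ y, exp ⟪y, θ⟫ • (innerSL ℝ y).smulRight (g y) ∂ν) h
      = ∫ y, exp ⟪y, θ⟫ • ⟪y, h⟫ • g y ∂ν := by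
  rw [ContinuousLinearMap.integral_apply (integrable_exp_inner_smul_smulRight hν hg hgB θ)]
  rfl

lemma hasFDerivAt_tiltedMean [CompleteSpace E] [SecondCountableTopology E] [NeZero ν]
    (hν : ∀ᵐ y ∂ν, ‖y‖ ≤ R) (θ : E) :
    ∃ D : E →L[ℝ] E, HasFDerivAt (tiltedMean ν) D θ ∧ ∀ h, D h =
      (laplaceTransform ν θ)⁻¹ • ((∫ y, exp ⟪y, θ⟫ • ⟪y, h⟫ • y ∂ν)
        - (∫ y, exp ⟪y, θ⟫ • ⟪y, h⟫ ∂ν) • tiltedMean ν θ) := by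
  have hZ0 := (laplaceTransform_pos hν θ).ne'
  have hone : ∀ᵐ y ∂ν, ‖(fun _ => (1 : ℝ)) y‖ ≤ 1 := .of_forall fun _ => by simp
  have hZ : HasFDerivAt (laplaceTransform ν)
      (∫ y, exp ⟪y, θ⟫ • (innerSL ℝ y).smulRight (1 : ℝ) ∂ν) θ := by
    have := hasFDerivAt_integral_exp_inner_smul hν aestronglyMeasurable_const hone θ
    simp only [smul_eq_mul, mul_one] at this
    exact this
  have hM := hasFDerivAt_integral_exp_inner_smul hν (g := fun y => y)
    aestronglyMeasurable_id hν θ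
  refine ⟨_, ((hasDerivAt_inv hZ0).comp_hasFDerivAt θ hZ).smul hM, fun h => ?_⟩
  have hZh := integral_exp_inner_smul_smulRight_apply hν aestronglyMeasurable_const hone θ h
  have hMh := integral_exp_inner_smul_smulRight_apply hν (g := fun y => y)
    aestronglyMeasurable_id hν θ h
  simp only [smul_eq_mul, mul_one] at hZh
  simp only [add_apply, smul_apply, ContinuousLinearMap.smulRight_apply, Function.comp_def,
    hZh, hMh, tiltedMean, smul_sub, smul_smul]
  simp only [smul_eq_mul]
  module

lemma norm_fderiv_tiltedMean_le [CompleteSpace E] [SecondCountableTopology E] [NeZero ν]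
    (hν : ∀ᵐ y ∂ν, ‖y‖ ≤ R) (θ : E) : ‖fderiv ℝ (tiltedMean ν) θ‖ ≤ 2 * R ^ 2 := by
  obtain ⟨D, hD, hDh⟩ := hasFDerivAt_tiltedMean hν θ
  have hZ := laplaceTransform_pos hν θ
  obtain ⟨y₀, hy₀⟩ := hν.exists
  have hR : 0 ≤ R := (norm_nonneg _).trans hy₀
  rw [hD.fderiv]
  refine D.opNorm_le_bound (by positivity) fun h => ?_
  have hinner : ∀ᵐ y ∂ν, ‖⟪y, h⟫‖ ≤ R * ‖h‖ := hν.mono fun y hy =>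
    (norm_inner_le_norm y h).trans (mul_le_mul_of_nonneg_right hy (norm_nonneg h))
  have hA : ‖∫ y, exp ⟪y, θ⟫ • ⟪y, h⟫ • y ∂ν‖ ≤ R * ‖h‖ * R * laplaceTransform ν θ := by
    refine norm_integral_exp_inner_smul_le hν ?_ θ
    filter_upwards [hν, hinner] with y hy hyh
    rw [norm_smul]
    exact mul_le_mul hyh hy (norm_nonneg _) (by positivity)
  have hb := norm_integral_exp_inner_smul_le hν hinner θ
  rw [hDh, norm_smul, norm_inv, norm_of_nonneg hZ.le, inv_mul_le_iff₀ hZ]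
  calc _ ≤ ‖∫ y, exp ⟪y, θ⟫ • ⟪y, h⟫ • y ∂ν‖
        + ‖∫ y, exp ⟪y, θ⟫ • ⟪y, h⟫ ∂ν‖ * ‖tiltedMean ν θ‖ :=
        (norm_sub_le _ _).trans_eq (by rw [norm_smul])
    _ ≤ R * ‖h‖ * R * laplaceTransform ν θ + R * ‖h‖ * laplaceTransform ν θ * R :=
        add_le_add hA (mul_le_mul hb (norm_tiltedMean_le hν θ) (norm_nonneg _) (by positivity))
    _ = laplaceTransform ν θ * (2 * R ^ 2 * ‖h‖) := by ring

end Tilt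

lemma exp_neg_norm_sub_smul_sq_div {E : Type*} [NormedAddCommGroup E] [InnerProductSpace ℝ E]
    {σ : ℝ} (hσ : σ ≠ 0) (s : ℝ) (x y : E) :
    exp (-‖y - s • x‖ ^ 2 / (2 * σ))
      = exp (-(s ^ 2 * ‖x‖ ^ 2) / (2 * σ))
        * (exp ⟪y, (s / σ) • x⟫ * exp (-‖y‖ ^ 2 / (2 * σ))) := by
  rw [← exp_add, ← exp_add, norm_sub_sq_real, norm_smul, mul_pow, Real.norm_eq_abs, sq_abs]
  simp only [real_inner_smul_right]
  congr 1
  field_simp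
  ring

section GaussianKernel

variable {E : Type*} [NormedAddCommGroup E] [MeasurableSpace E] {μ : Measure E} {r : E → ℝ}
  {σ : ℝ}

def gaussianWeightedMeasure (μ : Measure E) (σ : ℝ) (r : E → ℝ) : Measure E :=
  μ.withDensity fun y => ENNReal.ofReal (exp (-‖y‖ ^ 2 / (2 * σ)) * r y)

lemma integrable_gaussianWeight [OpensMeasurableSpace E] {p : E → ℝ} {c : ℝ} (hc : 0 < c)
    (hσ : 0 < σ) (hσ1 : σ ≤ 1) (hr : ∀ y, 0 ≤ r y)
    (hp : ∀ y, p y = r y * (c * exp (-‖y‖ ^ 2 / 2))) (hpi : Integrable p μ) :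
    Integrable (fun y => exp (-‖y‖ ^ 2 / (2 * σ)) * r y) μ := by
  have hrw : ∀ y, exp (-‖y‖ ^ 2 / (2 * σ)) * r y
      = exp (-‖y‖ ^ 2 / (2 * σ)) / (c * exp (-‖y‖ ^ 2 / 2)) * p y := fun y => by
    rw [hp]
    field_simp
  refine (hpi.const_mul c⁻¹).mono' ?_ (.of_forall fun y => ?_)
  · simp_rw [hrw]
    exact (Continuous.div (by fun_prop) (by fun_prop) fun y => by positivity)
      |>.aestronglyMeasurable.mul hpi.1
  · have hexp : -‖y‖ ^ 2 / (2 * σ) ≤ -‖y‖ ^ 2 / 2 := by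
      rw [div_le_div_iff₀ (by positivity) two_pos]
      nlinarith [sq_nonneg ‖y‖]
    rw [norm_of_nonneg (mul_nonneg (exp_pos _).le (hr y)), hp, ← mul_assoc, mul_comm c⁻¹,
      mul_assoc, inv_mul_cancel_left₀ hc.ne', mul_comm]
    exact mul_le_mul_of_nonneg_left (exp_le_exp.2 hexp) (hr y)

lemma ae_norm_le_gaussianWeightedMeasure {R : ℝ}
    (hw : AEMeasurable (fun y => exp (-‖y‖ ^ 2 / (2 * σ)) * r y) μ)
    (hR : ∀ y, r y ≠ 0 → ‖y‖ ≤ R) : ∀ᵐ y ∂gaussianWeightedMeasure μ σ r, ‖y‖ ≤ R := by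
  rw [ae_iff, gaussianWeightedMeasure, withDensity_apply_eq_zero' hw.ennreal_ofReal]
  convert measure_empty (μ := μ)
  refine eq_empty_of_forall_notMem fun y ⟨hy, hyR⟩ => hyR (hR y fun hr0 => hy ?_)
  simp [hr0]

variable [InnerProductSpace ℝ E] {F : Type*} [NormedAddCommGroup F] [NormedSpace ℝ F]

lemma integral_gaussianKernel_mul_smul (hr : ∀ y, 0 ≤ r y)
    (hw : AEMeasurable (fun y => exp (-‖y‖ ^ 2 / (2 * σ)) * r y) μ) (hσ : σ ≠ 0)
    (g : E → F) (s : ℝ) (x : E) :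
    ∫ y, (exp (-‖y - s • x‖ ^ 2 / (2 * σ)) * r y) • g y ∂μ
      = exp (-(s ^ 2 * ‖x‖ ^ 2) / (2 * σ)) •
        ∫ y, exp ⟪y, (s / σ) • x⟫ • g y ∂gaussianWeightedMeasure μ σ r := by
  rw [gaussianWeightedMeasure, integral_withDensity_eq_integral_toReal_smul₀ hw.ennreal_ofReal
    (.of_forall fun _ => ENNReal.ofReal_lt_top), ← integral_smul]
  congr 1 with y
  rw [ENNReal.toReal_ofReal (mul_nonneg (exp_pos _).le (hr y)),
    exp_neg_norm_sub_smul_sq_div hσ, smul_smul, smul_smul]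
  ring_nf

lemma integral_gaussianKernel_mul (hr : ∀ y, 0 ≤ r y)
    (hw : AEMeasurable (fun y => exp (-‖y‖ ^ 2 / (2 * σ)) * r y) μ) (hσ : σ ≠ 0)
    (c s : ℝ) (x : E) :
    ∫ y, c * exp (-‖y - s • x‖ ^ 2 / (2 * σ)) * r y ∂μ
      = c * exp (-(s ^ 2 * ‖x‖ ^ 2) / (2 * σ))
        * laplaceTransform (gaussianWeightedMeasure μ σ r) ((s / σ) • x) := by
  have := integral_gaussianKernel_mul_smul hr hw hσ (fun _ => (1 : ℝ)) s x
  simp only [smul_eq_mul, mul_one] at this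
  simp only [mul_assoc, integral_const_mul, this, laplaceTransform]

lemma integral_gaussianPosterior_smul_sub [CompleteSpace E] [BorelSpace E]
    [SecondCountableTopology E] {R c s : ℝ} (hr : ∀ y, 0 ≤ r y)
    (hw : AEMeasurable (fun y => exp (-‖y‖ ^ 2 / (2 * σ)) * r y) μ) (hσ : σ ≠ 0) (hc : c ≠ 0)
    [IsFiniteMeasure (gaussianWeightedMeasure μ σ r)] [NeZero (gaussianWeightedMeasure μ σ r)]
    (hν : ∀ᵐ y ∂gaussianWeightedMeasure μ σ r, ‖y‖ ≤ R) (x : E) :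
    ∫ y, (c * exp (-‖y - s • x‖ ^ 2 / (2 * σ)) * r y
        / ∫ z, c * exp (-‖z - s • x‖ ^ 2 / (2 * σ)) * r z ∂μ) • (y - s • x) ∂μ
      = tiltedMean (gaussianWeightedMeasure μ σ r) ((s / σ) • x) - s • x := by
  have hZ := (laplaceTransform_pos hν ((s / σ) • x)).ne'
  set Q := ∫ z, c * exp (-‖z - s • x‖ ^ 2 / (2 * σ)) * r z ∂μ with hQ
  calc _ = ∫ y, (Q⁻¹ * c) • ((exp (-‖y - s • x‖ ^ 2 / (2 * σ)) * r y) • (y - s • x)) ∂μ := by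
        congr 1 with y
        rw [smul_smul]
        congr 1
        ring
    _ = _ := by
      rw [integral_smul, integral_gaussianKernel_mul_smul hr hw hσ,
        integral_exp_inner_smul_sub hν, hQ, integral_gaussianKernel_mul hr hw hσ, smul_smul,
        smul_smul]
      convert one_smul ℝ (tiltedMean (gaussianWeightedMeasure μ σ r) ((s / σ) • x) - s • x)
        using 2
      field_simp

end GaussianKernel

lemma norm_fderiv_smul_comp_smul_sub_le {E : Type*} [NormedAddCommGroup E] [NormedSpace ℝ E]
    {f : E → E} {a b c : ℝ} {x : E} (hf : DifferentiableAt ℝ f (a • x)) :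
    ‖fderiv ℝ (fun x => b • (f (a • x) - c • x)) x‖
      ≤ |b| * (|a| * ‖fderiv ℝ f (a • x)‖ + |c|) := by
  have hlin : HasFDerivAt (fun x : E => a • x) (a • ContinuousLinearMap.id ℝ E) x :=
    (hasFDerivAt_id x).const_smul a
  have hD : HasFDerivAt (fun x => b • (f (a • x) - c • x)) _ x :=
    ((hf.hasFDerivAt.comp x hlin).sub ((hasFDerivAt_id x).const_smul c)).const_smul b
  rw [hD.fderiv, norm_smul, Real.norm_eq_abs]
  gcongr
  refine (norm_sub_le _ _).trans (add_le_add ?_ ?_)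
  · refine (ContinuousLinearMap.opNorm_comp_le _ _).trans ?_
    rw [norm_smul, Real.norm_eq_abs, mul_comm]
    exact mul_le_mul_of_nonneg_right
      ((mul_le_mul_of_nonneg_left ContinuousLinearMap.norm_id_le (abs_nonneg a)).trans_eq
        (mul_one _)) (norm_nonneg _)
  · rw [norm_smul, Real.norm_eq_abs]
    exact (mul_le_mul_of_nonneg_left ContinuousLinearMap.norm_id_le (abs_nonneg c)).trans_eq
      (mul_one _)

theorem stmt_14_general (R : ℝ) :
    ∃ C > 0, ∀ (d : ℕ)
      (r p γd : EuclideanSpace ℝ (Fin d) → ℝ)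
      (φ : ℝ → EuclideanSpace ℝ (Fin d) → EuclideanSpace ℝ (Fin d) → ℝ)
      (Q : ℝ → EuclideanSpace ℝ (Fin d) → ℝ)
      (ptx : ℝ → EuclideanSpace ℝ (Fin d) → EuclideanSpace ℝ (Fin d) → ℝ)
      (V : ℝ → EuclideanSpace ℝ (Fin d) → EuclideanSpace ℝ (Fin d)),
      (∀ y, γd y = (2 * π) ^ (-(d : ℝ) / 2) * Real.exp (-‖y‖ ^ 2 / 2)) →
      (∀ y, 0 ≤ r y) → (∀ y, p y = r y * γd y) → (∫ y, p y = 1) →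
      (∀ y, p y ≠ 0 → ‖y‖ < R) →
      (∀ s x y, φ s x y = (2 * π * (1 - s ^ 2)) ^ (-(d : ℝ) / 2) *
        Real.exp (-‖y - s • x‖ ^ 2 / (2 * (1 - s ^ 2)))) →
      (∀ s x, Q s x = ∫ y, φ s x y * r y) →
      (∀ s ∈ Ico (0 : ℝ) 1, ∀ x, 0 < Q s x) →
      (∀ s x y, ptx s x y = φ s x y * r y / Q s x) →
      (∀ s x, V s x = (1 / (1 - s ^ 2)) • ∫ y, ptx s x y • (y - s • x)) →
      ∀ t ∈ Ico (0 : ℝ) 1, ∀ s ∈ Icc (0 : ℝ) t, ∀ x,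
        ‖V s x‖ ≤ (R + ‖x‖) / (1 - t ^ 2) ∧
        ‖fderiv ℝ (V s) x‖ ≤ C / (1 - t ^ 2) ^ 2 := by
  refine ⟨2 * R ^ 2 + 1, by positivity, ?_⟩
  intro d r p γd φ Q ptx V hγ hr hp hp_one hp_supp hφ hQ hQ_pos hptx hV t ⟨ht0, ht1⟩
    s ⟨hs0, hst⟩ x
  have hs1 : s < 1 := hst.trans_lt ht1
  have ht : 0 < 1 - t ^ 2 := by nlinarith
  have hσt : 1 - t ^ 2 ≤ 1 - s ^ 2 := by nlinarith
  have hσ : 0 < 1 - s ^ 2 := ht.trans_le hσt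
  have hw := integrable_gaussianWeight (σ := 1 - s ^ 2) (c := (2 * π) ^ (-(d : ℝ) / 2))
    (by positivity) hσ (by nlinarith) hr (fun y => by rw [hp, hγ])
    (integrable_of_integral_eq_one hp_one)
  set ν := gaussianWeightedMeasure volume (1 - s ^ 2) r
  have : IsFiniteMeasure ν := isFiniteMeasure_withDensity_ofReal hw.2
  have hνR : ∀ᵐ y ∂ν, ‖y‖ ≤ R := ae_norm_le_gaussianWeightedMeasure hw.aemeasurable
    fun y hy => (hp_supp y (by rw [hp, hγ]; positivity)).le
  have : NeZero ν := ⟨fun hν0 => (hQ_pos s ⟨hs0, hs1⟩ 0).ne' <| by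
    simp only [hQ, hφ]
    rw [integral_gaussianKernel_mul hr hw.aemeasurable hσ.ne',
      show gaussianWeightedMeasure volume (1 - s ^ 2) r = 0 from hν0, laplaceTransform,
      integral_zero_measure, mul_zero]⟩
  have hVs : V s = fun x =>
      (1 / (1 - s ^ 2)) • (tiltedMean ν ((s / (1 - s ^ 2)) • x) - s • x) := by
    funext x
    simp only [hV, hptx, hQ, hφ]
    rw [integral_gaussianPosterior_smul_sub hr hw.aemeasurable hσ.ne' (by positivity) hνR]
  have hR0 : 0 ≤ R := (norm_nonneg _).trans (norm_tiltedMean_le hνR 0)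
  rw [hVs]
  constructor
  · calc _ = (1 / (1 - s ^ 2)) * ‖tiltedMean ν ((s / (1 - s ^ 2)) • x) - s • x‖ := by
          rw [norm_smul, norm_of_nonneg (by positivity)]
      _ ≤ (1 / (1 - s ^ 2)) * (R + ‖x‖) := by
          gcongr
          refine (norm_sub_le _ _).trans (add_le_add (norm_tiltedMean_le hνR _) ?_)
          rw [norm_smul, norm_of_nonneg hs0]
          exact mul_le_of_le_one_left (norm_nonneg _) hs1.le
      _ ≤ (R + ‖x‖) / (1 - t ^ 2) := by
          rw [one_div_mul_eq_div]
          gcongr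
  · obtain ⟨D, hD, -⟩ := hasFDerivAt_tiltedMean hνR ((s / (1 - s ^ 2)) • x)
    calc _ ≤ |1 / (1 - s ^ 2)|
          * (|s / (1 - s ^ 2)| * ‖fderiv ℝ (tiltedMean ν) _‖ + |s|) :=
          norm_fderiv_smul_comp_smul_sub_le hD.differentiableAt
      _ ≤ 1 / (1 - s ^ 2) * (s / (1 - s ^ 2) * (2 * R ^ 2) + s) := by
          rw [abs_of_nonneg (by positivity), abs_of_nonneg (by positivity), abs_of_nonneg hs0]
          gcongr
          exact norm_fderiv_tiltedMean_le hνR _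
      _ ≤ (2 * R ^ 2 + 1) / (1 - s ^ 2) ^ 2 := by
          rw [div_mul_eq_mul_div, one_mul, div_le_div_iff₀ hσ (by positivity)]
          field_simp
          nlinarith [sq_nonneg R]
      _ ≤ (2 * R ^ 2 + 1) / (1 - t ^ 2) ^ 2 := by gcongr

/-- bounds on the velocity field and its spatial Jacobian for a
compactly supported target density. -/
theorem stmt_14 (R : ℝ) (hR : 0 < R) :
    ∃ C > 0, ∀ (d : ℕ)
      (r p γd : EuclideanSpace ℝ (Fin d) → ℝ)
      (φ : ℝ → EuclideanSpace ℝ (Fin d) → EuclideanSpace ℝ (Fin d) → ℝ)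
      (Q : ℝ → EuclideanSpace ℝ (Fin d) → ℝ)
      (ptx : ℝ → EuclideanSpace ℝ (Fin d) → EuclideanSpace ℝ (Fin d) → ℝ)
      (V : ℝ → EuclideanSpace ℝ (Fin d) → EuclideanSpace ℝ (Fin d)),
      (∀ y, γd y = (2 * π) ^ (-(d : ℝ) / 2) * Real.exp (-‖y‖ ^ 2 / 2)) →
      (∀ y, 0 ≤ r y) → (∀ y, p y = r y * γd y) → (∫ y, p y = 1) →
      (∀ y, p y ≠ 0 → ‖y‖ < R) →
      (∀ s x y, φ s x y = (2 * π * (1 - s ^ 2)) ^ (-(d : ℝ) / 2) *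
        Real.exp (-‖y - s • x‖ ^ 2 / (2 * (1 - s ^ 2)))) →
      (∀ s x, Q s x = ∫ y, φ s x y * r y) →
      (∀ s ∈ Ico (0 : ℝ) 1, ∀ x, 0 < Q s x) →
      (∀ s x y, ptx s x y = φ s x y * r y / Q s x) →
      (∀ s x, V s x = (1 / (1 - s ^ 2)) • ∫ y, ptx s x y • (y - s • x)) →
      ∀ t ∈ Ico (0 : ℝ) 1, ∀ s ∈ Icc (0 : ℝ) t, ∀ x,
        ‖V s x‖ ≤ (R + ‖x‖) / (1 - t ^ 2) ∧
        ‖fderiv ℝ (V s) x‖ ≤ C / (1 - t ^ 2) ^ 2 :=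
  stmt_14_general R
end
end
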